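/- Let a, m, ν ∈ ℂ with sin(2πa) ≠ 0, and define M_A := diag(e^{2πia}, e^{−2πia}) and M_B := (1/sin(2πa))·[[e^{−iν/2} sin(π(2a−m)), e^{iν/2} sin(πm)], [−e^{−iν/2} sin(πm), e^{iν/2} sin(π(2a+m))]]. Then M_A and M_B are invertible, tr(M_A·M_B) = (sin(π(2a−m))·e^{i(2πa−ν/2)} + sin(π(2a+m))·e^{−i(2πa−ν/2)})/sin(2πa), and tr(M_A⁻¹·M_B⁻¹·M_A·M_B) = 2cos(2πm). -/

import Mathlib

/-- The B-cycle monodromy matrix of the one-punctured torus. -/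
noncomputable def MBmat (a m ν : ℂ) : Matrix (Fin 2) (Fin 2) ℂ :=
  (Complex.sin (2 * (Real.pi : ℂ) * a))⁻¹ •
    !![Complex.exp (-Complex.I * ν / 2) * Complex.sin ((Real.pi : ℂ) * (2 * a - m)),
        Complex.exp (Complex.I * ν / 2) * Complex.sin ((Real.pi : ℂ) * m);
      -(Complex.exp (-Complex.I * ν / 2) * Complex.sin ((Real.pi : ℂ) * m)),
        Complex.exp (Complex.I * ν / 2) * Complex.sin ((Real.pi : ℂ) * (2 * a + m))]

/-- The A-cycle monodromy matrix `M_A = diag(e^{2πia}, e^{-2πia})`. -/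
noncomputable def MAmat (a : ℂ) : Matrix (Fin 2) (Fin 2) ℂ :=
  Matrix.diagonal ![Complex.exp (2 * (Real.pi : ℂ) * Complex.I * a),
    Complex.exp (-(2 * (Real.pi : ℂ) * Complex.I * a))]

set_option maxHeartbeats 2000000 in
/-- The trace coordinates of the one-punctured torus monodromy:
`M_A` and `M_B` are invertible,
`tr(M_A M_B) = (sin(π(2a-m))e^{i(2πa-ν/2)} + sin(π(2a+m))e^{-i(2πa-ν/2)})/sin(2πa)`,
and `tr(M_A⁻¹M_B⁻¹M_A M_B) = 2cos(2πm)`. -/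
theorem MA_MB_traces (a m ν : ℂ) (ha : Complex.sin (2 * (Real.pi : ℂ) * a) ≠ 0) :
    IsUnit (MAmat a) ∧ IsUnit (MBmat a m ν) ∧
    (MAmat a * MBmat a m ν).trace =
      (Complex.sin ((Real.pi : ℂ) * (2 * a - m)) *
          Complex.exp (Complex.I * (2 * (Real.pi : ℂ) * a - ν / 2)) +
        Complex.sin ((Real.pi : ℂ) * (2 * a + m)) *
          Complex.exp (-(Complex.I * (2 * (Real.pi : ℂ) * a - ν / 2)))) /
        Complex.sin (2 * (Real.pi : ℂ) * a) ∧
    ((MAmat a)⁻¹ * (MBmat a m ν)⁻¹ * MAmat a * MBmat a m ν).trace =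
      2 * Complex.cos (2 * (Real.pi : ℂ) * m) := by
  have r1 : Complex.exp (-(2 * (Real.pi : ℂ) * Complex.I * a)) =
      (Complex.exp (2 * (Real.pi : ℂ) * Complex.I * a))⁻¹ := by
    rw [Complex.exp_neg]
  have r2 : Complex.exp (-Complex.I * ν / 2) = (Complex.exp (Complex.I * ν / 2))⁻¹ := by
    rw [show -Complex.I * ν / 2 = -(Complex.I * ν / 2) by ring, Complex.exp_neg]
  have r2' : Complex.exp (-(Complex.I * ν) / 2) = (Complex.exp (Complex.I * ν / 2))⁻¹ := by
    rw [show -(Complex.I * ν) / 2 = -(Complex.I * ν / 2) by ring, Complex.exp_neg]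
  have r3 : Complex.exp (2 * (Real.pi : ℂ) * a * Complex.I) =
      Complex.exp (2 * (Real.pi : ℂ) * Complex.I * a) := by
    congr 1; ring
  have r4 : Complex.exp (-(2 * (Real.pi : ℂ) * a) * Complex.I) =
      (Complex.exp (2 * (Real.pi : ℂ) * Complex.I * a))⁻¹ := by
    rw [show -(2 * (Real.pi : ℂ) * a) * Complex.I = -(2 * (Real.pi : ℂ) * Complex.I * a) by ring,
      Complex.exp_neg]
  have r5 : Complex.exp ((Real.pi : ℂ) * (2 * a - m) * Complex.I) =
      Complex.exp (2 * (Real.pi : ℂ) * Complex.I * a) * (Complex.exp ((Real.pi : ℂ) * m * Complex.I))⁻¹ := by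
    rw [show (Real.pi : ℂ) * (2 * a - m) * Complex.I =
      2 * (Real.pi : ℂ) * Complex.I * a + -((Real.pi : ℂ) * m * Complex.I) by ring,
      Complex.exp_add, Complex.exp_neg]
  have r6 : Complex.exp (-((Real.pi : ℂ) * (2 * a - m)) * Complex.I) =
      (Complex.exp (2 * (Real.pi : ℂ) * Complex.I * a))⁻¹ * Complex.exp ((Real.pi : ℂ) * m * Complex.I) := by
    rw [show -((Real.pi : ℂ) * (2 * a - m)) * Complex.I =
      -(2 * (Real.pi : ℂ) * Complex.I * a) + (Real.pi : ℂ) * m * Complex.I by ring,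
      Complex.exp_add, Complex.exp_neg]
  have r7 : Complex.exp ((Real.pi : ℂ) * (2 * a + m) * Complex.I) =
      Complex.exp (2 * (Real.pi : ℂ) * Complex.I * a) * Complex.exp ((Real.pi : ℂ) * m * Complex.I) := by
    rw [show (Real.pi : ℂ) * (2 * a + m) * Complex.I =
      2 * (Real.pi : ℂ) * Complex.I * a + (Real.pi : ℂ) * m * Complex.I by ring, Complex.exp_add]
  have r8 : Complex.exp (-((Real.pi : ℂ) * (2 * a + m)) * Complex.I) =
      (Complex.exp (2 * (Real.pi : ℂ) * Complex.I * a))⁻¹ * (Complex.exp ((Real.pi : ℂ) * m * Complex.I))⁻¹ := by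
    rw [show -((Real.pi : ℂ) * (2 * a + m)) * Complex.I =
      -(2 * (Real.pi : ℂ) * Complex.I * a) + -((Real.pi : ℂ) * m * Complex.I) by ring,
      Complex.exp_add, Complex.exp_neg, Complex.exp_neg]
  have r10 : Complex.exp (-((Real.pi : ℂ) * m) * Complex.I) =
      (Complex.exp ((Real.pi : ℂ) * m * Complex.I))⁻¹ := by
    rw [show -((Real.pi : ℂ) * m) * Complex.I = -((Real.pi : ℂ) * m * Complex.I) by ring,
      Complex.exp_neg]
  have r11 : Complex.exp (2 * (Real.pi : ℂ) * m * Complex.I) =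
      Complex.exp ((Real.pi : ℂ) * m * Complex.I) * Complex.exp ((Real.pi : ℂ) * m * Complex.I) := by
    rw [show 2 * (Real.pi : ℂ) * m * Complex.I =
      (Real.pi : ℂ) * m * Complex.I + (Real.pi : ℂ) * m * Complex.I by ring, Complex.exp_add]
  have r12 : Complex.exp (-(2 * (Real.pi : ℂ) * m) * Complex.I) =
      (Complex.exp ((Real.pi : ℂ) * m * Complex.I))⁻¹ * (Complex.exp ((Real.pi : ℂ) * m * Complex.I))⁻¹ := by
    rw [show -(2 * (Real.pi : ℂ) * m) * Complex.I =
      -((Real.pi : ℂ) * m * Complex.I) + -((Real.pi : ℂ) * m * Complex.I) by ring,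
      Complex.exp_add, Complex.exp_neg]
  have r13 : Complex.exp (Complex.I * (2 * (Real.pi : ℂ) * a - ν / 2)) =
      Complex.exp (2 * (Real.pi : ℂ) * Complex.I * a) * (Complex.exp (Complex.I * ν / 2))⁻¹ := by
    rw [show Complex.I * (2 * (Real.pi : ℂ) * a - ν / 2) =
      2 * (Real.pi : ℂ) * Complex.I * a + -(Complex.I * ν / 2) by ring,
      Complex.exp_add, Complex.exp_neg]
  have r14 : Complex.exp (-(Complex.I * (2 * (Real.pi : ℂ) * a - ν / 2))) =
      (Complex.exp (2 * (Real.pi : ℂ) * Complex.I * a))⁻¹ * Complex.exp (Complex.I * ν / 2) := by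
    rw [show -(Complex.I * (2 * (Real.pi : ℂ) * a - ν / 2)) =
      -(2 * (Real.pi : ℂ) * Complex.I * a) + Complex.I * ν / 2 by ring,
      Complex.exp_add, Complex.exp_neg]
  have hE : Complex.exp (2 * (Real.pi : ℂ) * Complex.I * a) ≠ 0 := Complex.exp_ne_zero _
  have hV : Complex.exp ((Real.pi : ℂ) * m * Complex.I) ≠ 0 := Complex.exp_ne_zero _
  have hWn : Complex.exp (Complex.I * ν / 2) ≠ 0 := Complex.exp_ne_zero _
  -- inverse of MA
  have hA : MAmat a * Matrix.diagonal ![Complex.exp (-(2 * (Real.pi : ℂ) * Complex.I * a)),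
      Complex.exp (2 * (Real.pi : ℂ) * Complex.I * a)] = 1 := by
    ext i j
    fin_cases i <;> fin_cases j <;>
      simp [MAmat, Matrix.mul_apply, Fin.sum_univ_two, Matrix.diagonal, Matrix.one_apply,
        ← Complex.exp_add]
  have ha2 := ha
  simp only [Complex.sin] at ha2
  simp only [r3, r4] at ha2
  -- inverse of MB
  have key : !![Complex.exp (-Complex.I * ν / 2) * Complex.sin ((Real.pi : ℂ) * (2 * a - m)),
        Complex.exp (Complex.I * ν / 2) * Complex.sin ((Real.pi : ℂ) * m);
      -(Complex.exp (-Complex.I * ν / 2) * Complex.sin ((Real.pi : ℂ) * m)),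
        Complex.exp (Complex.I * ν / 2) * Complex.sin ((Real.pi : ℂ) * (2 * a + m))] *
      !![Complex.exp (Complex.I * ν / 2) * Complex.sin ((Real.pi : ℂ) * (2 * a + m)),
          -(Complex.exp (Complex.I * ν / 2) * Complex.sin ((Real.pi : ℂ) * m));
        Complex.exp (-Complex.I * ν / 2) * Complex.sin ((Real.pi : ℂ) * m),
          Complex.exp (-Complex.I * ν / 2) * Complex.sin ((Real.pi : ℂ) * (2 * a - m))] =
      (Complex.sin (2 * (Real.pi : ℂ) * a) * Complex.sin (2 * (Real.pi : ℂ) * a)) •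
        (1 : Matrix (Fin 2) (Fin 2) ℂ) := by
    simp only [Complex.sin]
    simp only [r2', r2, r3, r4, r5, r6, r7, r8, r10]
    ext i j
    fin_cases i <;> fin_cases j
    · simp [Matrix.mul_apply, Fin.sum_univ_two, Matrix.one_apply]
      set E := Complex.exp (2 * (Real.pi : ℂ) * Complex.I * a) with hEdef
      set V := Complex.exp ((Real.pi : ℂ) * m * Complex.I) with hVdef
      set W := Complex.exp (Complex.I * ν / 2) with hWdef
      have hE1 : E * E⁻¹ = 1 := mul_inv_cancel₀ hE
      have hV1 : V * V⁻¹ = 1 := mul_inv_cancel₀ hV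
      have hW1 : W * W⁻¹ = 1 := mul_inv_cancel₀ hWn
      linear_combination (((1:ℂ)/2) * Complex.I^2 + ((-1:ℂ)/4) * V⁻¹^2 * W * W⁻¹ * Complex.I^2 + ((-1:ℂ)/4) * V^2 * W * W⁻¹ * Complex.I^2) * hE1 + (((-1:ℂ)/2) * W * W⁻¹ * Complex.I^2 + ((1:ℂ)/4) * E⁻¹^2 * W * W⁻¹ * Complex.I^2 + ((1:ℂ)/4) * E^2 * W * W⁻¹ * Complex.I^2) * hV1 + (((-1:ℂ)/2) * Complex.I^2 + ((1:ℂ)/4) * E⁻¹^2 * Complex.I^2 + ((1:ℂ)/4) * E^2 * Complex.I^2) * hW1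
    · simp [Matrix.mul_apply, Fin.sum_univ_two, Matrix.one_apply]
      ring
    · simp [Matrix.mul_apply, Fin.sum_univ_two, Matrix.one_apply]
      ring
    · simp [Matrix.mul_apply, Fin.sum_univ_two, Matrix.one_apply]
      set E := Complex.exp (2 * (Real.pi : ℂ) * Complex.I * a) with hEdef
      set V := Complex.exp ((Real.pi : ℂ) * m * Complex.I) with hVdef
      set W := Complex.exp (Complex.I * ν / 2) with hWdef
      have hE1 : E * E⁻¹ = 1 := mul_inv_cancel₀ hE
      have hV1 : V * V⁻¹ = 1 := mul_inv_cancel₀ hV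
      have hW1 : W * W⁻¹ = 1 := mul_inv_cancel₀ hWn
      linear_combination (((1:ℂ)/2) * Complex.I^2 + ((-1:ℂ)/4) * V⁻¹^2 * W * W⁻¹ * Complex.I^2 + ((-1:ℂ)/4) * V^2 * W * W⁻¹ * Complex.I^2) * hE1 + (((-1:ℂ)/2) * W * W⁻¹ * Complex.I^2 + ((1:ℂ)/4) * E⁻¹^2 * W * W⁻¹ * Complex.I^2 + ((1:ℂ)/4) * E^2 * W * W⁻¹ * Complex.I^2) * hV1 + (((-1:ℂ)/2) * Complex.I^2 + ((1:ℂ)/4) * E⁻¹^2 * Complex.I^2 + ((1:ℂ)/4) * E^2 * Complex.I^2) * hW1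
  have hB : MBmat a m ν * ((Complex.sin (2 * (Real.pi : ℂ) * a))⁻¹ •
      !![Complex.exp (Complex.I * ν / 2) * Complex.sin ((Real.pi : ℂ) * (2 * a + m)),
          -(Complex.exp (Complex.I * ν / 2) * Complex.sin ((Real.pi : ℂ) * m));
        Complex.exp (-Complex.I * ν / 2) * Complex.sin ((Real.pi : ℂ) * m),
          Complex.exp (-Complex.I * ν / 2) * Complex.sin ((Real.pi : ℂ) * (2 * a - m))]) = 1 := by
    rw [MBmat, Matrix.smul_mul, Matrix.mul_smul, key, smul_smul, smul_smul,
      show (Complex.sin (2 * (Real.pi : ℂ) * a))⁻¹ * (Complex.sin (2 * (Real.pi : ℂ) * a))⁻¹ *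
        (Complex.sin (2 * (Real.pi : ℂ) * a) * Complex.sin (2 * (Real.pi : ℂ) * a)) = 1 by
          field_simp, one_smul]
  refine ⟨IsUnit.of_mul_eq_one _ hA, IsUnit.of_mul_eq_one _ hB, ?_, ?_⟩
  · -- trace of MA * MB
    rw [MBmat, MAmat, r13, r14]
    simp only [Complex.sin]
    simp only [r1, r2', r2, r3, r4, r5, r6, r7, r8, r10]
    rw [Matrix.mul_smul, Matrix.trace_smul, smul_eq_mul, inv_mul_eq_div,
      div_eq_div_iff ha2 ha2]
    simp [Matrix.trace_fin_two, Matrix.mul_apply, Fin.sum_univ_two, Matrix.diagonal]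
    exact Or.inl (by ring)
  · -- trace of commutator
    rw [Matrix.inv_eq_right_inv hA, Matrix.inv_eq_right_inv hB, MBmat, MAmat]
    simp only [Complex.sin, Complex.cos]
    simp only [r1, r2', r2, r3, r4, r5, r6, r7, r8, r10, r11, r12]
    simp only [Matrix.smul_mul, Matrix.mul_smul, Matrix.trace_smul, smul_eq_mul]
    rw [inv_mul_eq_div, inv_mul_eq_div, div_div, div_eq_iff (mul_ne_zero ha2 ha2)]
    simp [Matrix.trace_fin_two, Matrix.mul_apply, Fin.sum_univ_two, Matrix.diagonal]
    set E := Complex.exp (2 * (Real.pi : ℂ) * Complex.I * a) with hEdef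
    set V := Complex.exp ((Real.pi : ℂ) * m * Complex.I) with hVdef
    set W := Complex.exp (Complex.I * ν / 2) with hWdef
    have hE1 : E * E⁻¹ = 1 := mul_inv_cancel₀ hE
    have hV1 : V * V⁻¹ = 1 := mul_inv_cancel₀ hV
    have hW1 : W * W⁻¹ = 1 := mul_inv_cancel₀ hWn
    linear_combination (((1:ℂ)/2) * V⁻¹^2 * Complex.I^2 + ((-1:ℂ)/2) * V⁻¹^2 * W * W⁻¹ * Complex.I^2 + ((1:ℂ)/2) * V^2 * Complex.I^2 + ((-1:ℂ)/2) * V^2 * W * W⁻¹ * Complex.I^2 + ((1:ℂ)/2) * E⁻¹^2 * V * V⁻¹ * W * W⁻¹ * Complex.I^2 + ((-1:ℂ)/2) * E * E⁻¹ * V⁻¹^2 * W * W⁻¹ * Complex.I^2 + ((-1:ℂ)/2) * E * E⁻¹ * V^2 * W * W⁻¹ * Complex.I^2 + ((1:ℂ)/2) * E^2 * V * V⁻¹ * W * W⁻¹ * Complex.I^2) * hE1 + (((-1:ℂ)/2) * V⁻¹^2 * Complex.I^2 + ((-1:ℂ)/2) * V^2 * Complex.I^2 + ((1:ℂ)/4)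 * E⁻¹^2 * V⁻¹^2 * Complex.I^2 + ((1:ℂ)/4) * E⁻¹^2 * V^2 * Complex.I^2 + ((1:ℂ)/4) * E^2 * V⁻¹^2 * Complex.I^2 + ((1:ℂ)/4) * E^2 * V^2 * Complex.I^2) * hW1
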